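/- Let m ≥ 2, let s_1,…,s_m be nonnegative integers with total t = s_1+⋯+s_m, and let l_j, u_j be integers with 0 ≤ l_j ≤ u_j ≤ s_j and l_j + u_j = s_j for each j (symmetric core constraints). For a nonnegative integer n let N(n) = ∑ ∏_{j=1}^m C(s_j, x_j), the sum over all x ∈ ℕ^m with x_1+⋯+x_m = n and l_j ≤ x_j ≤ u_j for all j. Then for any two sample sizes n, n' with 0 ≤ n' < n and 2n ≤ t, one has N(n)·C(t, n') ≥ N(n')·C(t, n); equivalently, P_n[X ∈ B] ≥ P_{n'}[X ∈ B]. -/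

import Mathlib

/-!
The numbers `N r` are the coefficients of `F = ∏ⱼ pⱼ`, where `pⱼ = ∑_{v = lⱼ}^{uⱼ} C(sⱼ, v) Xᵛ`
is the binomial `(1 + X)^sⱼ` truncated to the degrees `[lⱼ, uⱼ]`. The claim is that
`N r / C(t, r)` increases for `r ≤ t / 2`, i.e. `(t - r) N r ≤ (r + 1) N (r + 1)` there.
The derivation `(X + 1) d/dX` acts on each `pⱼ` as multiplication by `sⱼ` up to the two boundary
terms `lⱼ C(sⱼ, lⱼ) (X^uⱼ - X^(lⱼ - 1))`, so that inequality reduces to comparing the coefficients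
of the cofactor `∏_{i ≠ j} pᵢ` at `r - uⱼ` and `r - lⱼ + 1`. They are in the right order because
the cofactor has palindromic coefficients which, by the same inequality for fewer colours,
are unimodal; so everything follows by induction on the set of colours.
-/

open Polynomial Finset

/-- For `c` symmetric about `T / 2`, this says that `c` is unimodal with its mode at `T / 2`. -/
def UnimodalAbout (T : ℕ) (c : ℕ → ℕ) : Prop :=
  ∀ ⦃a b⦄, b ≤ a → a + b ≤ T → c b ≤ c a

section Sequences

variable {T : ℕ} {c : ℕ → ℕ}

lemma monotoneOn_of_step (hstep : ∀ r, 2 * (r + 1) ≤ T → (T - r) * c r ≤ (r + 1) * c (r + 1)) :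
    MonotoneOn c {r | 2 * r ≤ T} := by
  intro b _ a ha hba
  simp only [Set.mem_ofPred_eq] at ha
  induction a, hba using Nat.le_induction with
  | base => rfl
  | succ a hba ih =>
    have hlt : (a + 1) * c a ≤ (T - a) * c a := Nat.mul_le_mul_right _ (by omega)
    exact (ih (by omega)).trans (Nat.le_of_mul_le_mul_left (hlt.trans (hstep a ha)) a.succ_pos)

lemma unimodalAbout_of_step (hsymm : ∀ r ≤ T, c (T - r) = c r)
    (hstep : ∀ r, 2 * (r + 1) ≤ T → (T - r) * c r ≤ (r + 1) * c (r + 1)) :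
    UnimodalAbout T c := by
  intro a b hba hab
  by_cases ha : 2 * a ≤ T
  · exact monotoneOn_of_step hstep (show 2 * b ≤ T by omega) ha hba
  · rw [← hsymm a (by omega)]
    exact monotoneOn_of_step hstep (show 2 * b ≤ T by omega) (show 2 * (T - a) ≤ T by omega)
      (by omega)

lemma mul_choose_le_of_step (hstep : ∀ r, 2 * (r + 1) ≤ T → (T - r) * c r ≤ (r + 1) * c (r + 1))
    {a b : ℕ} (hba : b ≤ a) (ha : 2 * a ≤ T) : c b * T.choose a ≤ c a * T.choose b := by
  induction a, hba using Nat.le_induction with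
  | base => rfl
  | succ a hba ih =>
    refine Nat.le_of_mul_le_mul_left ?_ a.succ_pos
    calc (a + 1) * (c b * T.choose (a + 1))
        = c b * T.choose a * (T - a) := by rw [mul_comm, mul_assoc, Nat.choose_succ_right_eq]; ring
      _ ≤ c a * T.choose b * (T - a) := Nat.mul_le_mul_right _ (ih (by omega))
      _ = (T - a) * c a * T.choose b := by ring
      _ ≤ (a + 1) * c (a + 1) * T.choose b := Nat.mul_le_mul_right _ (hstep a ha)
      _ = (a + 1) * (c (a + 1) * T.choose b) := by ring

end Sequences

namespace Polynomial

variable {R ι : Type*}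

lemma coeff_X_add_one_mul_derivative [Semiring R] (p : R[X]) (k : ℕ) :
    ((X + 1) * derivative p).coeff k = p.coeff k * k + p.coeff (k + 1) * (k + 1) := by
  rw [add_mul, one_mul, coeff_add, coeff_derivative]
  cases k with
  | zero => simp
  | succ k => rw [coeff_X_mul, coeff_derivative]; push_cast; rfl

lemma reflect_prod [CommSemiring R] (A : Finset ι) (p : ι → R[X]) (N : ι → ℕ)
    (h : ∀ j ∈ A, (p j).natDegree ≤ N j) :
    reflect (∑ j ∈ A, N j) (∏ j ∈ A, p j) = ∏ j ∈ A, reflect (N j) (p j) := by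
  classical
  induction A using Finset.induction with
  | empty => simp
  | insert a A ha ih =>
    rw [prod_insert ha, sum_insert ha, prod_insert ha,
      reflect_mul _ _ (h a (mem_insert_self a A))
        ((natDegree_prod_le _ _).trans (sum_le_sum fun j hj => h j (mem_insert_of_mem hj))),
      ih fun j hj => h j (mem_insert_of_mem hj)]

lemma coeff_X_pow_mul_le_of_unimodalAbout (g : ℕ[X]) {T a b r : ℕ} (hg : UnimodalAbout T g.coeff)
    (hba : b ≤ a) (hr : 2 * r ≤ T + a + b) : (X ^ a * g).coeff r ≤ (X ^ b * g).coeff r := by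
  rw [coeff_X_pow_mul', coeff_X_pow_mul']
  split_ifs
  · exact hg (by omega) (by omega)
  · omega
  · exact Nat.zero_le _
  · exact Nat.zero_le _

lemma smul_prod_add_eq_of_forall [CommSemiring R] [DecidableEq ι] (A : Finset ι)
    (s : ι → ℕ) (p a b : ι → R[X])
    (h : ∀ j ∈ A, s j • p j + a j = (X + 1) * derivative (p j) + b j) :
    (∑ j ∈ A, s j) • ∏ j ∈ A, p j + ∑ j ∈ A, a j * ∏ i ∈ A.erase j, p i
      = (X + 1) * derivative (∏ j ∈ A, p j) + ∑ j ∈ A, b j * ∏ i ∈ A.erase j, p i := by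
  rw [sum_smul, derivative_prod_finset, mul_sum, ← sum_add_distrib, ← sum_add_distrib]
  refine sum_congr rfl fun j hj => ?_
  rw [← mul_prod_erase A p hj, ← smul_mul_assoc, ← add_mul, h j hj]
  ring

end Polynomial

noncomputable def truncBinomial (l u : ℕ) : ℕ[X] :=
  ∑ v ∈ Icc l u, monomial v ((l + u).choose v)

lemma coeff_truncBinomial (l u k : ℕ) :
    (truncBinomial l u).coeff k = if k ∈ Icc l u then (l + u).choose k else 0 := by
  simp only [truncBinomial, finsetSum_coeff, coeff_monomial]
  exact sum_ite_eq' _ _ _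

lemma natDegree_truncBinomial_le (l u : ℕ) : (truncBinomial l u).natDegree ≤ l + u :=
  natDegree_le_iff_coeff_eq_zero.mpr fun k hk => by
    rw [coeff_truncBinomial, if_neg (by simp only [mem_Icc]; omega)]

lemma reflect_truncBinomial (l u : ℕ) :
    reflect (l + u) (truncBinomial l u) = truncBinomial l u := by
  ext k
  rw [coeff_reflect]
  rcases le_or_gt k (l + u) with hk | hk
  · rw [revAt_le hk, coeff_truncBinomial, coeff_truncBinomial, Nat.choose_symm hk]
    exact if_congr (by simp only [mem_Icc]; omega) rfl rfl
  · rw [revAt_eq_self_of_lt hk]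

-- For the full binomial `(1 + X) ^ (l + u)` the boundary terms vanish: `(X + 1) * p' = (l + u) • p`.
lemma smul_truncBinomial_add_eq {l u : ℕ} (h : l ≤ u) :
    (l + u) • truncBinomial l u + (l * (l + u).choose l) • X ^ (l - 1)
      = (X + 1) * derivative (truncBinomial l u) + (l * (l + u).choose l) • X ^ u := by
  ext k
  have hsucc := Nat.choose_succ_right_eq (l + u) k
  have hsymm : (l + u).choose u = (l + u).choose l := Nat.choose_symm_add.symm
  simp only [coeff_add, coeff_smul, coeff_X_add_one_mul_derivative, coeff_truncBinomial,
    coeff_X_pow, smul_eq_mul, mem_Icc]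
  split_ifs <;> try omega
  · obtain ⟨rfl, rfl⟩ : l = 0 ∧ k = 0 := by omega
    simp
  · obtain ⟨rfl, rfl, rfl⟩ : l = 0 ∧ k = 0 ∧ u = 0 := by omega
    simp
  · rw [Nat.cast_id, hsucc, mul_zero, add_zero, add_zero, ← mul_add, mul_comm]
    congr 1
    omega
  · obtain rfl : k = u := by omega
    rw [hsymm, Nat.cast_id]
    ring
  · obtain rfl : l = k + 1 := by omega
    rw [Nat.cast_id]
    ring

section Product

variable {ι : Type*} (l u : ι → ℕ)

lemma coeff_prod_truncBinomial_symm (A : Finset ι) {r : ℕ} (hr : r ≤ ∑ j ∈ A, (l j + u j)) :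
    (∏ j ∈ A, truncBinomial (l j) (u j)).coeff (∑ j ∈ A, (l j + u j) - r)
      = (∏ j ∈ A, truncBinomial (l j) (u j)).coeff r := by
  rw [← revAt_le hr, ← coeff_reflect,
    reflect_prod _ _ _ fun j _ => natDegree_truncBinomial_le (l j) (u j)]
  simp only [reflect_truncBinomial]

variable [DecidableEq ι]

lemma step_prod_truncBinomial {A : Finset ι} (hlu : ∀ j ∈ A, l j ≤ u j)
    (hG : ∀ j ∈ A, UnimodalAbout (∑ i ∈ A.erase j, (l i + u i))
      (∏ i ∈ A.erase j, truncBinomial (l i) (u i)).coeff)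
    {r : ℕ} (hr : 2 * (r + 1) ≤ ∑ j ∈ A, (l j + u j)) :
    (∑ j ∈ A, (l j + u j) - r) * (∏ j ∈ A, truncBinomial (l j) (u j)).coeff r
      ≤ (r + 1) * (∏ j ∈ A, truncBinomial (l j) (u j)).coeff (r + 1) := by
  set α : ι → ℕ := fun j => l j * (l j + u j).choose (l j)
  have key := congrArg (coeff · r) (smul_prod_add_eq_of_forall A (fun j => l j + u j)
    (fun j => truncBinomial (l j) (u j)) (fun j => α j • X ^ (l j - 1)) (fun j => α j • X ^ u j)
    fun j hj => smul_truncBinomial_add_eq (hlu j hj))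
  simp only [coeff_add, coeff_smul, finsetSum_coeff, coeff_X_add_one_mul_derivative,
    smul_eq_mul, Nat.cast_id] at key
  have hdefect : ∑ j ∈ A, (α j • X ^ u j * ∏ i ∈ A.erase j, truncBinomial (l i) (u i)).coeff r
      ≤ ∑ j ∈ A, (α j • X ^ (l j - 1) * ∏ i ∈ A.erase j, truncBinomial (l i) (u i)).coeff r := by
    refine sum_le_sum fun j hj => ?_
    have hsum : l j + u j + ∑ i ∈ A.erase j, (l i + u i) = ∑ i ∈ A, (l i + u i) :=
      add_sum_erase A (fun i => l i + u i) hj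
    have hlu_j := hlu j hj
    rw [smul_mul_assoc, smul_mul_assoc, coeff_smul, coeff_smul]
    exact Nat.mul_le_mul_left _
      (coeff_X_pow_mul_le_of_unimodalAbout _ (hG j hj) (by omega) (by omega))
  rw [Nat.sub_mul, Nat.sub_le_iff_le_add]
  linarith

lemma unimodalAbout_prod_truncBinomial (A : Finset ι) (hlu : ∀ j ∈ A, l j ≤ u j) :
    UnimodalAbout (∑ j ∈ A, (l j + u j)) (∏ j ∈ A, truncBinomial (l j) (u j)).coeff := by
  induction A using Finset.strongInduction with
  | H A ih =>
    exact unimodalAbout_of_step (fun r hr => coeff_prod_truncBinomial_symm l u A hr)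
      fun r hr => step_prod_truncBinomial l u hlu
        (fun j hj => ih _ (erase_ssubset hj) fun i hi => hlu i (mem_of_mem_erase hi)) hr

end Product

lemma coeff_prod_truncBinomial {ι : Type*} [Fintype ι] [DecidableEq ι] (l u : ι → ℕ) (r : ℕ) :
    (∏ j, truncBinomial (l j) (u j)).coeff r
      = ∑ x ∈ (Fintype.piFinset fun j => Icc (l j) (u j)).filter (fun x => ∑ j, x j = r),
          ∏ j, (l j + u j).choose (x j) := by
  simp only [truncBinomial, prod_univ_sum, ← C_mul_X_pow_eq_monomial, prod_mul_distrib,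
    ← map_prod, prod_pow_eq_pow_sum, finsetSum_coeff, coeff_C_mul_X_pow, sum_filter, eq_comm]

theorem symmetric_core_ordering_lower_general (m : ℕ) (s l u : Fin m → ℕ)
    (hlu : ∀ j, l j ≤ u j)
    (hsym : ∀ j, l j + u j = s j)
    (t : ℕ) (ht : t = ∑ j, s j)
    (N : ℕ → ℕ)
    (hN : ∀ r, N r = ∑ x ∈ (Fintype.piFinset fun j => Finset.Icc (l j) (u j)).filter
        (fun x => ∑ j, x j = r), ∏ j, (s j).choose (x j))
    (n n' : ℕ) (h1 : n' < n) (h2 : 2 * n ≤ t) :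
    N n' * t.choose n ≤ N n * t.choose n' := by
  obtain rfl : s = fun j => l j + u j := funext fun j => (hsym j).symm
  subst ht
  have hN_coeff : ∀ r, N r = (∏ j, truncBinomial (l j) (u j)).coeff r := fun r => by
    rw [hN, coeff_prod_truncBinomial]
  rw [hN_coeff, hN_coeff]
  exact mul_choose_le_of_step
    (fun r hr => step_prod_truncBinomial l u (fun j _ => hlu j)
      (fun j _ => unimodalAbout_prod_truncBinomial l u _ fun i _ => hlu i) hr) h1.le h2

/-- Stochastic ordering of symmetric core event probabilities for the multiple
hypergeometric distribution: for `0 ≤ n' < n ≤ ⌊t/2⌋` (here `2n ≤ t`),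
`P_n[X ∈ B] ≥ P_{n'}[X ∈ B]`, stated in cross-multiplied form
`N(n)·C(t,n') ≥ N(n')·C(t,n)`. -/
theorem symmetric_core_ordering_lower (m : ℕ) (hm : 2 ≤ m) (s l u : Fin m → ℕ)
    (hlu : ∀ j, l j ≤ u j) (hus : ∀ j, u j ≤ s j)
    (hsym : ∀ j, l j + u j = s j)
    (t : ℕ) (ht : t = ∑ j, s j)
    (N : ℕ → ℕ)
    (hN : ∀ r, N r = ∑ x ∈ (Fintype.piFinset fun j => Finset.Icc (l j) (u j)).filter
        (fun x => ∑ j, x j = r), ∏ j, (s j).choose (x j))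
    (n n' : ℕ) (h1 : n' < n) (h2 : 2 * n ≤ t) :
    N n' * t.choose n ≤ N n * t.choose n' :=
  symmetric_core_ordering_lower_general m s l u hlu hsym t ht N hN n n' h1 h2
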